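/- Weak K-Knuth equivalence of words is preserved under restriction to an interval: if w is weak K-Knuth equivalent to w′, then for any interval I of positive integers, the subword of w consisting of letters in I is weak K-Knuth equivalent to the subword of w′ consisting of letters in I. -/

import Mathlib

/-- A shifted tableau: list of rows; row `i` is indented `i` units. -/
abbrev Tableau := List (List ℕ)

/-- Row `i` of a tableau. -/
def trow (T : Tableau) (i : ℕ) : List ℕ := T.getD i []

/-- Entry of `T` in row `i` and *absolute* column `j` (both 0-indexed). -/
def tentry? (T : Tableau) (i j : ℕ) : Option ℕ :=
  if i ≤ j then (trow T i)[j - i]? else none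

/-- The (shifted) shape of a tableau: the list of row lengths. -/
def tshape (T : Tableau) : List ℕ := T.map List.length

/-- A strict partition: strictly decreasing list of positive integers. -/
def IsStrictPartition (l : List ℕ) : Prop :=
  List.Chain' (fun a b => b < a) l ∧ ∀ x ∈ l, 0 < x

/-- Increasing shifted tableau: shape is a shifted shape of a strict partition
(row lengths strictly decrease), entries are positive and strictly increase
along rows and down columns. -/
def IsIncreasing (T : Tableau) : Prop :=
  (∀ r ∈ T, r ≠ []) ∧
  List.Chain' (fun r s => s.length < r.length) T ∧
  (∀ r ∈ T, List.Chain' (· < ·) r) ∧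
  (∀ i j a b, tentry? T i j = some a → tentry? T (i + 1) j = some b → a < b) ∧
  (∀ r ∈ T, ∀ x ∈ r, 0 < x)


/-- Result of inserting one letter: the new tableau, the box (row, absolute
column) where the insertion terminated, and whether the insertion ended with
column insertion or a failed row insertion into an empty row (primed). -/
structure InsRes where
  tab : Tableau
  box : ℕ × ℕ
  primed : Bool
deriving Repr, DecidableEq

def setEntry (T : Tableau) (i k x : ℕ) : Tableau := T.set i ((trow T i).set k x)

def appendEntry (T : Tableau) (i x : ℕ) : Tableau :=
  if i < T.length then T.set i (trow T i ++ [x]) else T ++ [[x]]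

/-- The rows having a box in absolute column `c`. -/
def colRows (T : Tableau) (c : ℕ) : List ℕ :=
  (List.range T.length).filter (fun i => (tentry? T i c).isSome)

inductive HMode where
  | row (r : ℕ)
  | col (c : ℕ)

/-- One step of shifted Hecke insertion (Patrias–Pylyavskyy): insert `x`
into row `r` (resp. column `c`), either terminating or producing an output
letter to be inserted into the next row (resp. column). -/
def insertStep (T : Tableau) : HMode → ℕ → InsRes ⊕ (Tableau × HMode × ℕ)
  | .row r, x =>
    let R := trow T r
    match R.findIdx? (fun a => decide (x < a)) with
    | none =>
      let kk := R.length
      let aboveOK : Bool := (r == 0) ||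
        ((tentry? T (r - 1) (r + kk)).elim false (fun a => decide (a < x)))
      if ((R.isEmpty : Bool) || decide (R.getLastD 0 < x)) && aboveOK then
        .inl ⟨appendEntry T r x, (r, r + kk), false⟩
      else if R.isEmpty then
        .inl ⟨T, (r - 1, (r - 1) + (trow T (r - 1)).length - 1), true⟩
      else
        .inl ⟨T, ((colRows T (r + kk - 1)).getLastD 0, r + kk - 1), false⟩
    | some k =>
      let y := R.getD k 0
      let ok : Bool := ((k == 0) || decide (R.getD (k - 1) 0 < x)) &&
        ((r == 0) || (tentry? T (r - 1) (r + k)).elim true (fun a => decide (a < x)))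
      let T' := if ok then setEntry T r k x else T
      if k == 0 then .inr (T', .col (r + 1), y) else .inr (T', .row (r + 1), y)
  | .col c, x =>
    let rows := colRows T c
    match rows.find? (fun i => decide (x < (tentry? T i c).getD 0)) with
    | none =>
      let istar := (rows.getLast?).elim 0 (· + 1)
      let k := c - istar
      let R := trow T istar
      let ok : Bool := decide (istar ≤ c) && (R.length == k) &&
        ((k == 0) || decide (R.getD (k - 1) 0 < x)) &&
        ((istar == 0) || (tentry? T (istar - 1) c).elim false (fun a => decide (a < x)))
      if ok then
        .inl ⟨appendEntry T istar x, (istar, c), true⟩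
      else
        let ib := rows.getLastD 0
        .inl ⟨T, (ib, ib + (trow T ib).length - 1), true⟩
    | some i =>
      let k := c - i
      let y := (trow T i).getD k 0
      let ok : Bool := ((k == 0) || decide ((trow T i).getD (k - 1) 0 < x)) &&
        ((i == 0) || (tentry? T (i - 1) c).elim true (fun a => decide (a < x)))
      let T' := if ok then setEntry T i k x else T
      .inr (T', .col (c + 1), y)

def insertAux : ℕ → Tableau → HMode → ℕ → InsRes
  | 0, T, _, _ => ⟨T, (0, 0), false⟩
  | fuel + 1, T, m, x =>
    match insertStep T m x with
    | .inl res => res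
    | .inr (T', m', x') => insertAux fuel T' m' x'

/-- Shifted Hecke insertion of a single letter `x` into `T`. -/
def insert1 (T : Tableau) (x : ℕ) : InsRes :=
  insertAux (T.length + (trow T 0).length + x + 10) T (.row 0) x

/-- Set-valued shifted tableaux (and weak set-valued shifted tableaux) are
fillings of a shifted shape by multisets of entries `(v, p)`, where `p = true`
means the entry is the primed letter `v'`. -/
abbrev SVTRep := List (List (Multiset (ℕ × Bool)))

def tabRecStep (TQ : Tableau × SVTRep) (ix : ℕ × ℕ) : Tableau × SVTRep :=
  let res := insert1 TQ.1 ix.2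
  let l : ℕ × Bool := (ix.1 + 1, res.primed)
  let r := res.box.1
  let k := res.box.2 - res.box.1
  let Q := TQ.2
  let Q' :=
    if tshape res.tab ≠ tshape TQ.1 then
      if r < Q.length then Q.set r ((Q.getD r []) ++ [{l}]) else Q ++ [[{l}]]
    else
      Q.set r ((Q.getD r []).set k (l ::ₘ (Q.getD r []).getD k 0))
  (res.tab, Q')

def tabRec (w : List ℕ) : Tableau × SVTRep := (w.zipIdx.map (fun p => (p.2, p.1))).foldl tabRecStep ([], [])

/-- The shifted Hecke insertion tableau of a word. -/
def Tab (w : List ℕ) : Tableau := (tabRec w).1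

/-- The shifted Hecke insertion recording tableau of a word. -/
def Rec (w : List ℕ) : SVTRep := (tabRec w).2

/-- Key giving the total order `1' < 1 < 2' < 2 < ⋯` ((v, true) means `v'`). -/
def keyOf (e : ℕ × Bool) : ℕ := 2 * e.1 - (if e.2 then 1 else 0)

def boxAt (T : SVTRep) (i k : ℕ) : Multiset (ℕ × Bool) := (T.getD i []).getD k 0

def sshape (T : SVTRep) : List ℕ := T.map List.length

/-- The multiset of all entries of a (weak) set-valued shifted tableau. -/
def totalMS (T : SVTRep) : Multiset (ℕ × Bool) := (T.map (fun r => r.sum)).sum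

/-- Weak set-valued shifted tableau: boxes of a shifted shape filled with
finite nonempty multisets of primed/unprimed positive integers, rows and
columns weakly increasing between boxes, no primed entries on the main
diagonal, each unprimed letter in at most one box per column, each primed
letter in at most one box per row. -/
def IsWSVT (T : SVTRep) : Prop :=
  (∀ r ∈ T, r ≠ []) ∧
  List.Chain' (fun r s => s.length < r.length) T ∧
  (∀ r ∈ T, ∀ b ∈ r, b ≠ 0) ∧
  (∀ e ∈ totalMS T, 0 < e.1) ∧
  (∀ i k, ∀ x ∈ boxAt T i k, ∀ y ∈ boxAt T i (k + 1), keyOf x ≤ keyOf y) ∧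
  (∀ i k, ∀ x ∈ boxAt T i (k + 1), ∀ y ∈ boxAt T (i + 1) k, keyOf x ≤ keyOf y) ∧
  (∀ i, ∀ e ∈ boxAt T i 0, e.2 = false) ∧
  (∀ v c : ℕ, {i | i ≤ c ∧ (v, false) ∈ boxAt T i (c - i)}.Subsingleton) ∧
  (∀ v i : ℕ, {k | (v, true) ∈ boxAt T i k}.Subsingleton)

/-- Set-valued shifted tableau: boxes contain (nonempty) *sets*. -/
def IsSVT (T : SVTRep) : Prop := IsWSVT T ∧ ∀ r ∈ T, ∀ b ∈ r, b.Nodup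

/-- Standard set-valued shifted tableau on `n` letters: each of `1, …, n`
appears exactly once, either primed or unprimed. -/
def IsStdSVT (n : ℕ) (T : SVTRep) : Prop :=
  IsSVT T ∧ Multiset.map Prod.fst (totalMS T) = (Finset.Icc 1 n).val

/-- Position (row, index-in-row) of the box containing a given entry. -/
def posOf (Q : SVTRep) (e : ℕ × Bool) : Option (ℕ × ℕ) :=
  (List.range Q.length).findSome? (fun i =>
    ((Q.getD i []).findIdx? (fun b => decide (e ∈ b))).map (fun k => (i, k)))

/-- Descent set of a standard set-valued shifted tableau. -/
def Ddesc (Q : SVTRep) : Set ℕ :=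
  {i | 1 ≤ i ∧ (
    ((posOf Q (i, false)).isSome ∧ (posOf Q (i + 1, true)).isSome) ∨
    (∃ p q, posOf Q (i, false) = some p ∧ posOf Q (i + 1, false) = some q ∧ p.1 < q.1) ∨
    (∃ p q, posOf Q (i, true) = some p ∧ posOf Q (i + 1, true) = some q ∧
      q.1 ≤ p.1 ∧ p ≠ q))}

/-- Descent set of a word (1-indexed): `{i : wᵢ > wᵢ₊₁}`. -/
def Dword (w : List ℕ) : Set ℕ :=
  {i | 1 ≤ i ∧ i + 1 ≤ w.length ∧ w.getD i 0 < w.getD (i - 1) 0}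

/-- Boxes (with multiplicity) containing the primed letter `v'`, top to bottom. -/
def occP (T : SVTRep) (v : ℕ) : List ((ℕ × ℕ) × ℕ) :=
  (List.range T.length).flatMap (fun i =>
    (List.range (T.getD i []).length).filterMap (fun k =>
      let m := (boxAt T i k).count (v, true)
      if m = 0 then none else some ((i, k), m)))

/-- Boxes (with multiplicity) containing the unprimed letter `v`, left to right. -/
def occU (T : SVTRep) (v : ℕ) : List ((ℕ × ℕ) × ℕ) :=
  ((List.range T.length).flatMap (fun i =>
    (List.range (T.getD i []).length).filterMap (fun k =>
      let m := (boxAt T i k).count (v, false)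
      if m = 0 then none else some ((i, k), m)))).mergeSort
    (fun p q => p.1.1 + p.1.2 ≤ q.1.1 + q.1.2)

/-- All occurrences of entries of `T` in the order `1' < 1 < 2' < 2 < ⋯`,
occurrences of `v` read left to right and of `v'` top to bottom. -/
def allOcc (T : SVTRep) : List ((ℕ × ℕ) × ℕ × Bool) :=
  (List.range (((totalMS T).map Prod.fst).sum)).flatMap (fun v0 =>
    (occP T (v0 + 1)).map (fun o => (o.1, o.2, true)) ++
    (occU T (v0 + 1)).map (fun o => (o.1, o.2, false)))

def addLabels (S : SVTRep) (p : ℕ × ℕ) (start m : ℕ) (pr : Bool) : SVTRep :=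
  S.set p.1 ((S.getD p.1 []).set p.2
    ((((List.range m).map (fun t => (start + t + 1, pr)) : List (ℕ × Bool)) : Multiset _) +
      (S.getD p.1 []).getD p.2 0))

/-- Standardization of a weak set-valued shifted tableau. -/
def stdize (T : SVTRep) : SVTRep :=
  ((allOcc T).foldl
    (fun Sn o => (addLabels Sn.1 o.1 Sn.2 o.2.1 o.2.2, Sn.2 + o.2.1))
    (T.map (fun r => r.map (fun _ => (0 : Multiset (ℕ × Bool)))), 0)).1
/-! ### Weak K-Knuth equivalence -/

/-- A single weak K-Knuth relation (Buch–Samuel), for positive letters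
`a < b < c`. -/
inductive KStep : List ℕ → List ℕ → Prop
  | dup (u v : List ℕ) (a : ℕ) (ha : 0 < a) :
      KStep (u ++ [a, a] ++ v) (u ++ [a] ++ v)
  | aba (u v : List ℕ) (a b : ℕ) (ha : 0 < a) (hab : a < b) :
      KStep (u ++ [a, b, a] ++ v) (u ++ [b, a, b] ++ v)
  | bac (u v : List ℕ) (a b c : ℕ) (ha : 0 < a) (hab : a < b) (hbc : b < c) :
      KStep (u ++ [b, a, c] ++ v) (u ++ [b, c, a] ++ v)
  | acb (u v : List ℕ) (a b c : ℕ) (ha : 0 < a) (hab : a < b) (hbc : b < c) :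
      KStep (u ++ [a, c, b] ++ v) (u ++ [c, a, b] ++ v)
  | front (u : List ℕ) (a b : ℕ) (ha : 0 < a) (hab : a < b) :
      KStep ([a, b] ++ u) ([b, a] ++ u)

/-- Weak K-Knuth equivalence: symmetric transitive (and reflexive) closure of
the weak K-Knuth relations. -/
def WeakKKnuth : List ℕ → List ℕ → Prop := Relation.EqvGen KStep

/-- Restriction of a word to the letters lying in the interval `[lo, hi]`. -/
def restrictWord (lo hi : ℕ) (w : List ℕ) : List ℕ :=
  w.filter (fun x => decide (lo ≤ x ∧ x ≤ hi))

/-- A word of positive integers. -/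
def PosWord (w : List ℕ) : Prop := ∀ x ∈ w, 0 < x

/-- The reading word of a tableau: rows left to right, bottom to top. -/
def rowword (T : Tableau) : List ℕ := T.reverse.flatten

/-- Unique rectification target: the only increasing shifted tableau in its
weak K-Knuth equivalence class. -/
def IsURT (T : Tableau) : Prop :=
  IsIncreasing T ∧
  ∀ T' : Tableau, IsIncreasing T' → WeakKKnuth (rowword T') (rowword T) → T' = T

/-- The minimal increasing shifted tableau of shape `λ`. -/
def Mtab (lam : List ℕ) : Tableau :=
  (List.range lam.length).map (fun i =>
    (List.range (lam.getD i 0)).map (fun p => 2 * i + p + 1))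

/-! ### Symmetric-function layer -/

/-- Number of entries of `T` equal to `v` or `v'`. -/
def wtOf (T : SVTRep) (v : ℕ) : ℕ := ((totalMS T).filter (fun e => e.1 = v)).card

/-- The weak shifted stable Grothendieck polynomial `K_λ`: the generating
function of weak set-valued shifted tableaux of shape `λ`. -/
noncomputable def Kser (lam : List ℕ) : MvPowerSeries ℕ ℚ :=
  fun μ => (Set.ncard {T : SVTRep | IsWSVT T ∧ sshape T = lam ∧ ∀ v, μ v = wtOf T v} : ℚ)

/-- The shifted stable Grothendieck polynomial `GP_λ` of Ikeda–Naruse: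
`GP_λ = Σ_T (-1)^{|T| - |λ|} x^T` over set-valued shifted tableaux of shape `λ`. -/
noncomputable def GPser (lam : List ℕ) : MvPowerSeries ℕ ℚ :=
  fun μ => ((-1 : ℚ)) ^ (μ.sum (fun _ e => e) - lam.sum) *
    (Set.ncard {T : SVTRep | IsSVT T ∧ sshape T = lam ∧ ∀ v, μ v = wtOf T v} : ℚ)

/-- Substitution `xᵢ ↦ -xᵢ/(1 - xᵢ)` in a multivariate power series, computed
coefficientwise: `[x^b] f(-x/(1-x)) = Σ_{a ≤ b} ([x^a] f) ∏ᵢ (-1)^{aᵢ} C(bᵢ-1, aᵢ-1)`,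
using that `(-x/(1-x))^a = Σ_{b ≥ a} (-1)^a C(b-1, a-1) x^b`. -/
noncomputable def substFrac (f : MvPowerSeries ℕ ℚ) : MvPowerSeries ℕ ℚ :=
  fun b => ∑ a ∈ Finset.Iic b, (MvPowerSeries.coeff a f) *
    ∏ i ∈ b.support,
      (if a i = 0 then 0 else
        ((-1 : ℚ)) ^ (a i) * (Nat.choose (b i - 1) (a i - 1) : ℚ))

/-- A power series in variables `x₀, x₁, …` is symmetric if it is invariant
under every permutation of the variables. -/
def IsSymmPS (f : MvPowerSeries ℕ ℚ) : Prop :=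
  ∀ (σ : Equiv.Perm ℕ) (μ : ℕ →₀ ℕ),
    MvPowerSeries.coeff (Finsupp.equivMapDomain σ μ) f = MvPowerSeries.coeff μ f

/-- The fundamental quasisymmetric function `f_D` for words of length `m`
(descent positions `D`, 1-indexed): `Σ x_{i₁} ⋯ x_{iₘ}` over
`i₁ ≤ ⋯ ≤ iₘ` with `i_j < i_{j+1}` whenever `j ∈ D`. -/
noncomputable def fQ (m : ℕ) (D : Set ℕ) : MvPowerSeries ℕ ℚ :=
  fun μ => (Set.ncard {s : ℕ → ℕ |
    (∀ i, 1 ≤ i → i ≤ m → 1 ≤ s i) ∧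
    (∀ i, i = 0 ∨ m < i → s i = 0) ∧
    (∀ i, 1 ≤ i → i + 1 ≤ m → s i ≤ s (i + 1)) ∧
    (∀ i ∈ D, 1 ≤ i → i + 1 ≤ m → s i < s (i + 1)) ∧
    (∀ v, μ v = Set.ncard {i | 1 ≤ i ∧ i ≤ m ∧ s i = v})} : ℚ)

/-- `IsShuffle u v w` : `w` is a shuffle (interleaving) of `u` and `v`. -/
inductive IsShuffle : List ℕ → List ℕ → List ℕ → Prop
  | nil : IsShuffle [] [] []
  | left {u v w : List ℕ} (a : ℕ) : IsShuffle u v w → IsShuffle (a :: u) v (a :: w)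
  | right {u v w : List ℕ} (a : ℕ) : IsShuffle u v w → IsShuffle u (a :: v) (a :: w)

/-! ### Skew shifted tableaux -/

/-- Entry of a skew filling `R` of shape `ν/λ` in row `i`, absolute column `j`. -/
def skentry? (lam : List ℕ) (R : List (List ℕ)) (i j : ℕ) : Option ℕ :=
  if i + lam.getD i 0 ≤ j then (R.getD i [])[j - i - lam.getD i 0]? else none

/-- Increasing shifted skew tableau of shape `ν/λ`. -/
def IsIncSkew (lam nu : List ℕ) (R : List (List ℕ)) : Prop :=
  lam.length ≤ nu.length ∧ (∀ i, lam.getD i 0 ≤ nu.getD i 0) ∧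
  R.length = nu.length ∧
  (∀ i, (R.getD i []).length = nu.getD i 0 - lam.getD i 0) ∧
  (∀ r ∈ R, List.Chain' (· < ·) r) ∧
  (∀ r ∈ R, ∀ x ∈ r, 0 < x) ∧
  (∀ i j a b, skentry? lam R i j = some a → skentry? lam R (i + 1) j = some b → a < b)

/-! ### Unshifted Hecke insertion and stable Grothendieck polynomials -/

/-- Hecke insertion (Buch–Kresch–Shimozono–Tamvakis–Yong) of a letter into the
rows of an (unshifted) increasing tableau; `prev` is the previous row. -/
def hIns : Option (List ℕ) → List (List ℕ) → ℕ → List (List ℕ)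
  | prev, [], x =>
      match prev with
      | none => [[x]]
      | some P => if P.getD 0 0 < x then [[x]] else []
  | prev, R :: rest, x =>
    match R.findIdx? (fun a => decide (x < a)) with
    | none =>
      let ok : Bool := ((R.isEmpty : Bool) || decide (R.getLastD 0 < x)) &&
        (prev.elim true (fun P => decide (R.length < P.length) && decide (P.getD R.length 0 < x)))
      if ok then (R ++ [x]) :: rest else R :: rest
    | some k =>
      let y := R.getD k 0
      let ok : Bool := ((k == 0) || decide (R.getD (k - 1) 0 < x)) &&
        (prev.elim true (fun P => decide (P.getD k 0 < x)))
      let R' := if ok then R.set k x else R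
      R' :: hIns (some R') rest y

/-- The (unshifted) Hecke insertion tableau `P_K(w)` of a word. -/
def PK (w : List ℕ) : List (List ℕ) := w.foldl (fun T x => hIns none T x) []

/-- Unshifted set-valued tableaux: boxes filled by finite nonempty sets. -/
abbrev USVRep := List (List (Multiset ℕ))

def uboxAt (T : USVRep) (i k : ℕ) : Multiset ℕ := (T.getD i []).getD k 0

/-- Set-valued tableau of (unshifted) partition shape: rows weakly increase,
columns weakly increase between boxes, and each integer appears in at most one
box of each column. -/
def IsUSV (T : USVRep) : Prop :=
  (∀ r ∈ T, r ≠ []) ∧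
  List.Chain' (fun r s => s.length ≤ r.length) T ∧
  (∀ r ∈ T, ∀ b ∈ r, b ≠ 0 ∧ b.Nodup) ∧
  (∀ r ∈ T, ∀ b ∈ r, ∀ x ∈ b, 0 < x) ∧
  (∀ i k, ∀ x ∈ uboxAt T i k, ∀ y ∈ uboxAt T i (k + 1), x ≤ y) ∧
  (∀ i k, ∀ x ∈ uboxAt T i k, ∀ y ∈ uboxAt T (i + 1) k, x ≤ y) ∧
  (∀ v k : ℕ, {i | v ∈ uboxAt T i k}.Subsingleton)

def uwt (T : USVRep) (v : ℕ) : ℕ :=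
  (((T.map (fun r => r.sum)).sum : Multiset ℕ).filter (fun x => x = v)).card

/-- The (signless) stable Grothendieck polynomial `G_μ`: generating function
of set-valued tableaux of shape `μ`. -/
noncomputable def Gser (mu : List ℕ) : MvPowerSeries ℕ ℚ :=
  fun μ => (Set.ncard {T : USVRep | IsUSV T ∧ T.map List.length = mu ∧ ∀ v, μ v = uwt T v} : ℚ)

theorem KStep.weakKKnuth {w w' : List ℕ} (h : KStep w w') : WeakKKnuth w w' :=
  .rel _ _ h

theorem WeakKKnuth.refl (w : List ℕ) : WeakKKnuth w w :=
  Relation.EqvGen.refl w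

theorem WeakKKnuth.symm {w w' : List ℕ} (h : WeakKKnuth w w') : WeakKKnuth w' w :=
  Relation.EqvGen.symm _ _ h

theorem WeakKKnuth.trans {w w' w'' : List ℕ} (h : WeakKKnuth w w') (h' : WeakKKnuth w' w'') :
    WeakKKnuth w w'' :=
  Relation.EqvGen.trans _ _ _ h h'

theorem WeakKKnuth.of_eq {w w' : List ℕ} (h : w = w') : WeakKKnuth w w' :=
  h ▸ .refl w

section Filter

variable {s : Set ℕ} [DecidablePred (· ∈ s)]

/-- Since `s` contains `b` whenever it contains `a < b < c`, each relation either survives the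
filter intact, degenerates to a `dup` (an `aba` missing one letter), or becomes an equality. -/
theorem KStep.weakKKnuth_filter (hs : s.OrdConnected) {w w' : List ℕ} (h : KStep w w') :
    WeakKKnuth (w.filter (· ∈ s)) (w'.filter (· ∈ s)) := by
  cases h with
  | dup u v a ha =>
    by_cases hsa : a ∈ s
    · simpa [hsa] using (KStep.dup (u.filter (· ∈ s)) (v.filter (· ∈ s)) a ha).weakKKnuth
    · exact .of_eq (by simp [hsa])
  | aba u v a b ha hab =>
    by_cases hsa : a ∈ s <;> by_cases hsb : b ∈ s
    · simpa [hsa, hsb] using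
        (KStep.aba (u.filter (· ∈ s)) (v.filter (· ∈ s)) a b ha hab).weakKKnuth
    · simpa [hsa, hsb] using
        (KStep.dup (u.filter (· ∈ s)) (v.filter (· ∈ s)) a ha).weakKKnuth
    · simpa [hsa, hsb] using
        (KStep.dup (u.filter (· ∈ s)) (v.filter (· ∈ s)) b (ha.trans hab)).weakKKnuth.symm
    · exact .of_eq (by simp [hsa, hsb])
  | bac u v a b c ha hab hbc =>
    by_cases hsac : a ∈ s ∧ c ∈ s
    · have hsb : b ∈ s := hs.out hsac.1 hsac.2 ⟨hab.le, hbc.le⟩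
      simpa [hsac, hsb] using
        (KStep.bac (u.filter (· ∈ s)) (v.filter (· ∈ s)) a b c ha hab hbc).weakKKnuth
    · exact .of_eq (by by_cases hsa : a ∈ s <;> simp_all [List.filter_cons])
  | acb u v a b c ha hab hbc =>
    by_cases hsac : a ∈ s ∧ c ∈ s
    · have hsb : b ∈ s := hs.out hsac.1 hsac.2 ⟨hab.le, hbc.le⟩
      simpa [hsac, hsb] using
        (KStep.acb (u.filter (· ∈ s)) (v.filter (· ∈ s)) a b c ha hab hbc).weakKKnuth
    · exact .of_eq (by by_cases hsa : a ∈ s <;> simp_all [List.filter_cons])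
  | front u a b ha hab =>
    by_cases hsab : a ∈ s ∧ b ∈ s
    · simpa [hsab] using (KStep.front (u.filter (· ∈ s)) a b ha hab).weakKKnuth
    · exact .of_eq (by by_cases hsa : a ∈ s <;> simp_all [List.filter_cons])

theorem WeakKKnuth.filter (hs : s.OrdConnected) {w w' : List ℕ} (h : WeakKKnuth w w') :
    WeakKKnuth (w.filter (· ∈ s)) (w'.filter (· ∈ s)) := by
  induction h with
  | rel _ _ hstep => exact hstep.weakKKnuth_filter hs
  | refl _ => exact .refl _
  | symm _ _ _ ih => exact ih.symm
  | trans _ _ _ _ _ ih₁ ih₂ => exact ih₁.trans ih₂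

end Filter

/-- weak K-Knuth equivalence is preserved by restricting both
words to an interval `[lo, hi]`. -/
theorem stmt2 (lo hi : ℕ) (w w' : List ℕ) (h : WeakKKnuth w w') :
    WeakKKnuth (restrictWord lo hi w) (restrictWord lo hi w') :=
  h.filter (s := Set.Icc lo hi) Set.ordConnected_Icc
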